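/- Let a : ℕ × ℕ → ℚ(q) be any doubly indexed sequence satisfying the q-Akiyama–Tanigawa recurrence a_{n+1, m} = [m+1]_q · ( a_{n, m} − a_{n, m+1} ) for all n, m ≥ 0. Then for every n ≥ 0, a_{n, 0} = ∑_{m=0}^{n} (−1)^m · [m]!_q · {n+1 brace m+1}_q · a_{0, m}. -/

import Mathlib

/-!
The recurrence is invariant under the shift `a_{n,m} ↦ a_{n+1,m}`, so by induction on `n`
(for all arrays at once) `a_{n+1,0}` is the claimed combination of the row `a_{1,m}`.
Substituting `a_{1,m} = [m+1]_q (a_{0,m} - a_{0,m+1})` and collecting the coefficient of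
`a_{0,m}` gives `(-1)^m [m]!_q ({n+1 brace m}_q + [m+1]_q {n+1 brace m+1}_q)`, which is the
Stirling recurrence for `{n+2 brace m+1}_q`.
-/

open Finset

/-- The q-integer `[n]_q = 1 + q + ⋯ + q^(n-1)`. -/
def qInt {R : Type*} [CommSemiring R] (q : R) (n : ℕ) : R :=
  ∑ i ∈ Finset.range n, q ^ i

/-- The q-factorial `[n]!_q = [1]_q [2]_q ⋯ [n]_q`. -/
def qFact {R : Type*} [CommSemiring R] (q : R) (n : ℕ) : R :=
  ∏ i ∈ Finset.range n, qInt q (i + 1)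

/-- The Carlitz q-Stirling numbers of the second kind. -/
def qStirling {R : Type*} [CommSemiring R] (q : R) : ℕ → ℕ → R
  | 0, 0 => 1
  | 0, _ + 1 => 0
  | _ + 1, 0 => 0
  | n + 1, m + 1 => qStirling q n m + qInt q (m + 1) * qStirling q n (m + 1)

section
variable {R : Type*} [CommSemiring R] (q : R)

theorem qFact_succ (m : ℕ) : qFact q (m + 1) = qFact q m * qInt q (m + 1) :=
  prod_range_succ _ _

@[simp]
theorem qStirling_succ_zero (n : ℕ) : qStirling q (n + 1) 0 = 0 := rfl

theorem qStirling_succ_succ (n m : ℕ) :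
    qStirling q (n + 1) (m + 1) = qStirling q n m + qInt q (m + 1) * qStirling q n (m + 1) :=
  rfl

theorem qStirling_eq_zero_of_lt {n m : ℕ} (h : n < m) : qStirling q n m = 0 := by
  induction n generalizing m with
  | zero => obtain ⟨m, rfl⟩ := Nat.exists_eq_add_one_of_ne_zero (by omega : m ≠ 0); rfl
  | succ n ih =>
    obtain ⟨m, rfl⟩ := Nat.exists_eq_add_one_of_ne_zero (by omega : m ≠ 0)
    rw [qStirling_succ_succ, ih (by omega), ih (by omega), mul_zero, add_zero]

end

section
variable {R : Type*} [CommRing R] (q : R)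

def qAkiyamaTanigawaCoeff (n m : ℕ) : R :=
  (-1) ^ m * qFact q m * qStirling q (n + 1) (m + 1)

theorem qAkiyamaTanigawaCoeff_succ_zero (n : ℕ) :
    qAkiyamaTanigawaCoeff q (n + 1) 0 = qAkiyamaTanigawaCoeff q n 0 * qInt q 1 := by
  simp only [qAkiyamaTanigawaCoeff, qStirling_succ_succ, qStirling_succ_zero]
  ring

theorem qAkiyamaTanigawaCoeff_succ_succ (n m : ℕ) :
    qAkiyamaTanigawaCoeff q (n + 1) (m + 1) =
      qAkiyamaTanigawaCoeff q n (m + 1) * qInt q (m + 2) -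
        qAkiyamaTanigawaCoeff q n m * qInt q (m + 1) := by
  simp only [qAkiyamaTanigawaCoeff, qStirling_succ_succ q (n + 1) (m + 1), qFact_succ]
  ring

theorem qAkiyamaTanigawaCoeff_eq_zero_of_lt {n m : ℕ} (h : n < m) :
    qAkiyamaTanigawaCoeff q n m = 0 := by
  rw [qAkiyamaTanigawaCoeff, qStirling_eq_zero_of_lt q (by omega), mul_zero]

theorem qAkiyamaTanigawa (a : ℕ → ℕ → R)
    (hrec : ∀ n m, a (n + 1) m = qInt q (m + 1) * (a n m - a n (m + 1))) (n : ℕ) :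
    a n 0 = ∑ m ∈ range (n + 1), qAkiyamaTanigawaCoeff q n m * a 0 m := by
  induction n generalizing a with
  | zero => simp [qAkiyamaTanigawaCoeff, qFact, qStirling]
  | succ n ih =>
    set f : ℕ → R := fun m => qAkiyamaTanigawaCoeff q n m * qInt q (m + 1)
    have hrow₁ : a (n + 1) 0 = ∑ m ∈ range (n + 1), f m * (a 0 m - a 0 (m + 1)) := by
      rw [ih (fun k => a (k + 1)) (fun k m => hrec (k + 1) m)]
      refine sum_congr rfl fun m _ => ?_
      rw [hrec]; ring
    have hshift : ∑ m ∈ range (n + 1), f m * a 0 m =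
        f 0 * a 0 0 + ∑ m ∈ range (n + 1), f (m + 1) * a 0 (m + 1) := by
      rw [sum_range_succ', sum_range_succ, add_comm]
      simp [f, qAkiyamaTanigawaCoeff_eq_zero_of_lt q (Nat.lt_succ_self n)]
    calc a (n + 1) 0 = ∑ m ∈ range (n + 1), f m * (a 0 m - a 0 (m + 1)) := hrow₁
      _ = f 0 * a 0 0 + ∑ m ∈ range (n + 1), (f (m + 1) - f m) * a 0 (m + 1) := by
        simp only [mul_sub, sub_mul, sum_sub_distrib, hshift]
        ring
      _ = ∑ m ∈ range (n + 2), qAkiyamaTanigawaCoeff q (n + 1) m * a 0 m := by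
        simp only [sum_range_succ' _ (n + 1), qAkiyamaTanigawaCoeff_succ_zero,
          qAkiyamaTanigawaCoeff_succ_succ, f]
        ring

end

/-- Variant A of the q-Akiyama–Tanigawa algorithm (Zeng): if
`a_{n+1,m} = [m+1]_q (a_{n,m} - a_{n,m+1})` for all `n, m ≥ 0`, then
`a_{n,0} = ∑_{m=0}^n (-1)^m [m]!_q {n+1 brace m+1}_q a_{0,m}`. -/
theorem qAkiyamaTanigawa_A (a : ℕ → ℕ → RatFunc ℚ)
    (hrec : ∀ n m : ℕ,
      a (n + 1) m = qInt (RatFunc.X : RatFunc ℚ) (m + 1) * (a n m - a n (m + 1))) :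
    ∀ n : ℕ, a n 0
      = ∑ m ∈ Finset.range (n + 1),
          (-1 : RatFunc ℚ) ^ m * qFact (RatFunc.X : RatFunc ℚ) m *
            qStirling (RatFunc.X : RatFunc ℚ) (n + 1) (m + 1) * a 0 m :=
  qAkiyamaTanigawa RatFunc.X a hrec
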